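/- arXiv:math/0508507 — 3 statements merged into one kernel-verified Lean document; each statement's English description precedes it below -/
import Mathlib

section
/- Every automorphism of A(T) = (G, (f_a)_{a∈G}) preserves each level G_n setwise and commutes with the predecessor function p; moreover, any automorphism is completely determined by its values on the elements id_n. -/
open scoped symmDiff

/-- `RankGE succ o x` means the tree rank of `x` (w.r.t. successor relation `succ`)
is at least `o`; unranked nodes (`rk = ∞`) satisfy this for every ordinal. -/
def RankGE {α : Type*} (succ : α → α → Prop) (o : Ordinal) (x : α) : Prop :=
  ∀ β < o, ∃ y, succ x y ∧ RankGE succ β y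
termination_by o

/-- `T` is a subtree of `ω^{<ω}`: closed under initial segments. -/
def IsTree (T : Set (List ℕ)) : Prop := ∀ s t : List ℕ, s <+: t → t ∈ T → s ∈ T

/-- `τ` is an immediate successor of `σ` in `T`. -/
def TSucc (T : Set (List ℕ)) (σ τ : List ℕ) : Prop := τ ∈ T ∧ ∃ k : ℕ, τ = σ ++ [k]

instance : Std.Commutative (α := Finset (List ℕ)) (· ∆ ·) := ⟨fun a b => symmDiff_comm a b⟩
instance : Std.Associative (α := Finset (List ℕ)) (· ∆ ·) := ⟨fun a b c => symmDiff_assoc a b c⟩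

/-- The predecessor map: the symmetric-difference sum of the singletons of the
`T`-predecessors of the members of `a`. -/
def pmap (a : Finset (List ℕ)) : Finset (List ℕ) :=
  Finset.fold (· ∆ ·) ∅ (fun t => {t.dropLast}) a

/-- The carrier `G = ⋃ₙ Gₙ`: an element of `Gₙ` is a pair `(n, a)` with `a` a finite
subset of the level-`n` nodes of `T`; `(n, ∅)` is the identity `idₙ` of `Gₙ`. -/
def Gset (T : Set (List ℕ)) : Set (ℕ × Finset (List ℕ)) :=
  {x | ∀ t ∈ x.2, t ∈ T ∧ t.length = x.1}

/-- The operations `f_a`: `fA a b = a* ∆ b*` where `a*`, `b*` are the iterated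
predecessors of `a`, `b` down to the minimum of their levels. -/
def fA (x y : ℕ × Finset (List ℕ)) : ℕ × Finset (List ℕ) :=
  (min x.1 y.1, (pmap^[x.1 - min x.1 y.1] x.2) ∆ (pmap^[y.1 - min x.1 y.1] y.2))

/-- An automorphism of the structure `A(T) = (G, (f_a)_{a ∈ G})`: a bijection of `G`
commuting with each of the named unary operations `f_a`. -/
def IsAuto (T : Set (List ℕ)) (g : ℕ × Finset (List ℕ) → ℕ × Finset (List ℕ)) : Prop :=
  Set.BijOn g (Gset T) (Gset T) ∧ ∀ a ∈ Gset T, ∀ b ∈ Gset T, g (fA a b) = fA a (g b)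

lemma pmap_empty : pmap ∅ = ∅ := rfl

lemma pmap_iterate_empty (j : ℕ) : pmap^[j] ∅ = ∅ :=
  Function.iterate_fixed pmap_empty j

lemma mem_pmap {a : Finset (List ℕ)} {t : List ℕ} (ht : t ∈ pmap a) :
    ∃ s ∈ a, t = s.dropLast := by
  classical
  induction a using Finset.induction with
  | empty => simp [pmap] at ht
  | @insert x s hx ih =>
    rw [pmap, Finset.fold_insert hx] at ht
    rcases Finset.mem_symmDiff.mp ht with ⟨h1, _⟩ | ⟨h1, _⟩
    · exact ⟨x, Finset.mem_insert_self _ _, Finset.mem_singleton.mp h1⟩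
    · obtain ⟨u, hu, rfl⟩ := ih h1
      exact ⟨u, Finset.mem_insert_of_mem hu, rfl⟩

lemma iter_level {T : Set (List ℕ)} (hT : IsTree T) :
    ∀ j (a : Finset (List ℕ)) (m : ℕ), j ≤ m →
      (∀ t ∈ a, t ∈ T ∧ t.length = m) →
      ∀ t ∈ pmap^[j] a, t ∈ T ∧ t.length = m - j := by
  intro j
  induction j with
  | zero => intro a m _ h t ht; simpa using h t ht
  | succ j ih =>
    intro a m hjm h t ht
    rw [Function.iterate_succ_apply'] at ht
    obtain ⟨s, hs, rfl⟩ := mem_pmap ht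
    obtain ⟨hsT, hslen⟩ := ih a m (by omega) h s hs
    refine ⟨hT _ _ s.dropLast_prefix hsT, ?_⟩
    rw [List.length_dropLast, hslen]
    omega

lemma id_mem {T : Set (List ℕ)} (n : ℕ) : ((n, (∅ : Finset (List ℕ)))) ∈ Gset T := by
  intro t ht; simp at ht

lemma fA_id_of_le {n : ℕ} {y : ℕ × Finset (List ℕ)} (h : y.1 ≤ n) :
    fA (n, ∅) y = y := by
  have h1 : min n y.1 = y.1 := min_eq_right h
  have h2 : (∅ : Finset (List ℕ)) ∆ y.2 = y.2 := by
    rw [← Finset.bot_eq_empty, bot_symmDiff]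
  simp [fA, h1, pmap_iterate_empty, h2]

lemma fA_id_eval (n : ℕ) (y : ℕ × Finset (List ℕ)) :
    fA (n, ∅) y = (min n y.1, pmap^[y.1 - min n y.1] y.2) := by
  simp [fA, pmap_iterate_empty]

lemma fA_id_mem {T : Set (List ℕ)} (hT : IsTree T) (n : ℕ) {x : ℕ × Finset (List ℕ)}
    (hx : x ∈ Gset T) : fA (n, ∅) x ∈ Gset T := by
  rw [fA_id_eval]
  intro t ht
  have := iter_level hT (x.1 - min n x.1) x.2 x.1 (by omega) hx t ht
  refine ⟨this.1, ?_⟩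
  rw [this.2]
  omega

lemma fA_self (x : ℕ × Finset (List ℕ)) : fA x x = (x.1, ∅) := by
  simp [fA]

lemma level_pres {T : Set (List ℕ)} (hT : IsTree T)
    {g : ℕ × Finset (List ℕ) → ℕ × Finset (List ℕ)} (hg : IsAuto T g) :
    ∀ x ∈ Gset T, (g x).1 = x.1 := by
  obtain ⟨hbij, hcomm⟩ := hg
  intro x hx
  have h1 : (g x).1 ≤ x.1 := by
    have h := hcomm (x.1, ∅) (id_mem x.1) x hx
    rw [fA_id_of_le le_rfl] at h
    have := congrArg Prod.fst h
    simp only [fA_id_eval] at this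
    omega
  have h2 : x.1 ≤ (g x).1 := by
    have h := hcomm ((g x).1, ∅) (id_mem (g x).1) x hx
    rw [fA_id_of_le le_rfl] at h
    have heq : fA ((g x).1, ∅) x = x :=
      hbij.injOn (fA_id_mem hT _ hx) hx h
    have := congrArg Prod.fst heq
    simp only [fA_id_eval] at this
    omega
  omega

theorem stmt_8 (T : Set (List ℕ)) (hT : IsTree T)
    (g : ℕ × Finset (List ℕ) → ℕ × Finset (List ℕ)) (hg : IsAuto T g) :
    (∀ x ∈ Gset T, (g x).1 = x.1) ∧
    (∀ x ∈ Gset T, 0 < x.1 → g (x.1 - 1, pmap x.2) = ((g x).1 - 1, pmap (g x).2)) ∧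
    (∀ g' : ℕ × Finset (List ℕ) → ℕ × Finset (List ℕ), IsAuto T g' →
      (∀ n : ℕ, g' (n, ∅) = g (n, ∅)) → ∀ x ∈ Gset T, g' x = g x) := by
  refine ⟨level_pres hT hg, ?_, ?_⟩
  · intro x hx hpos
    obtain ⟨hbij, hcomm⟩ := hg
    have hlev : (g x).1 = x.1 := level_pres hT ⟨hbij, hcomm⟩ x hx
    have h := hcomm (x.1 - 1, ∅) (id_mem _) x hx
    have e1 : fA (x.1 - 1, ∅) x = (x.1 - 1, pmap x.2) := by
      rw [fA_id_eval]
      have hm : min (x.1 - 1) x.1 = x.1 - 1 := min_eq_left (by omega)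
      rw [hm]
      have : x.1 - (x.1 - 1) = 1 := by omega
      rw [this, Function.iterate_one]
    have e2 : fA (x.1 - 1, ∅) (g x) = ((g x).1 - 1, pmap (g x).2) := by
      rw [fA_id_eval]
      have hm : min (x.1 - 1) (g x).1 = (g x).1 - 1 := by omega
      rw [hm]
      have : (g x).1 - ((g x).1 - 1) = 1 := by omega
      rw [this, Function.iterate_one]
    rw [e1, e2] at h
    exact h
  · intro g' hg' hid x hx
    have hl : (g x).1 = x.1 := level_pres hT hg x hx
    have hl' : (g' x).1 = x.1 := level_pres hT hg' x hx
    have h := hg.2 x hx x hx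
    have h' := hg'.2 x hx x hx
    rw [fA_self] at h h'
    have key : fA x (g' x) = fA x (g x) := by rw [← h, ← h', hid]
    have hmin : min x.1 (g x).1 = x.1 := by omega
    have hmin' : min x.1 (g' x).1 = x.1 := by omega
    simp only [fA, hmin, hmin', min_self, Nat.sub_self, hl, hl', Function.iterate_zero, id_eq,
      Prod.mk.injEq] at key
    have h2 : (g' x).2 = (g x).2 := symmDiff_right_injective x.2 key.2
    exact Prod.ext (by omega) h2
end

section
/- In A(T), for a ∈ G_n and any ordinal β: a ≡^β id_n if and only if the tree rank of a in the derived tree on G is at least ω·β. -/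
open scoped symmDiff

/-- The derived tree structure on `G`: `y ∈ G_{n+1}` is a successor of `x ∈ Gₙ` iff `p y = x`. -/
def Gsucc (T : Set (List ℕ)) (x y : ℕ × Finset (List ℕ)) : Prop :=
  y ∈ Gset T ∧ y.1 = x.1 + 1 ∧ pmap y.2 = x.2

abbrev GP := ℕ × Finset (List ℕ)

/-- Terms of the language of `A(T)`: variables and applications of the unary symbols `f_a`. -/
inductive ATerm : Type where
  | var : ℕ → ATerm
  | app : GP → ATerm → ATerm

def ATerm.eval (ρ : ℕ → GP) : ATerm → GP
  | .var i => ρ i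
  | .app a t => fA a (ATerm.eval ρ t)

/-- A term is `ok` if its variables are among `x₀, …, x_{k-1}` and its symbols come from `G`. -/
def ATerm.ok (T : Set (List ℕ)) (k : ℕ) : ATerm → Prop
  | .var i => i < k
  | .app a t => a ∈ Gset T ∧ ATerm.ok T k t

def env {k : ℕ} (a : Fin k → GP) : ℕ → GP := fun i => if h : i < k then a ⟨i, h⟩ else (0, ∅)

/-- `≡⁰`: the tuples satisfy the same quantifier-free formulas. -/
def eqQF (T : Set (List ℕ)) (k : ℕ) (a b : Fin k → GP) : Prop :=
  ∀ t₁ t₂ : ATerm, ATerm.ok T k t₁ → ATerm.ok T k t₂ →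
    (ATerm.eval (env a) t₁ = ATerm.eval (env a) t₂ ↔ ATerm.eval (env b) t₁ = ATerm.eval (env b) t₂)

/-- The standard back-and-forth equivalences `≡^β` on tuples of `A(T)`. -/
def BF (T : Set (List ℕ)) (β : Ordinal) (k : ℕ) (a b : Fin k → GP) : Prop :=
  if β = 0 then eqQF T k a b
  else ∀ γ < β,
    (∀ c ∈ Gset T, ∃ d ∈ Gset T, BF T γ (k + 1) (Fin.snoc a c) (Fin.snoc b d)) ∧
    (∀ d ∈ Gset T, ∃ c ∈ Gset T, BF T γ (k + 1) (Fin.snoc a c) (Fin.snoc b d))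
termination_by β

/-- `b̄` lies in the automorphism orbit of `ā`. -/
def InOrbit (T : Set (List ℕ)) {k : ℕ} (a b : Fin k → GP) : Prop :=
  ∃ g, IsAuto T g ∧ ∀ i, g (a i) = b i

/-- Scott rank of a tuple: the least `β` such that `≡^β`-equivalence to the tuple
implies membership in its orbit. -/
noncomputable def SR (T : Set (List ℕ)) {k : ℕ} (a : Fin k → GP) : Ordinal :=
  sInf {β : Ordinal | ∀ b : Fin k → GP, (∀ i, b i ∈ Gset T) → BF T β k a b → InOrbit T a b}

/-!
For tuples `ā, b̄` of `A(T)` with equal levels write `δᵢ = aᵢ ∆ bᵢ ∈ G_{|aᵢ|}`. Since `p` is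
additive, every term takes at `b̄` its value at `ā` shifted by a `p`-image of some `δᵢ`, so
`ā ≡⁰ b̄` says exactly that the `δᵢ` agree after projection to any common level. By induction
on `β`, `ā ≡^β b̄` holds iff moreover every `δᵢ` has rank `≥ ω·β`. Forward: matching
`id_{|aᵢ|+j}` for `γ < β` yields an element of rank `≥ ω·γ` whose `j`-th predecessor is `δᵢ`.
Backward: a new element `c` is matched by `c ∆ ε`, where `ε` is a lift to the level of `c` of a
difference of rank `≥ ω·β`, so still of rank `≥ ω·γ`. For the pair `(a, idₙ)` the difference
is `a` itself.
-/

open scoped Ordinal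

section Pmap

theorem Finset.insert_eq_singleton_symmDiff {α : Type*} [DecidableEq α] {x : α} {s : Finset α}
    (hx : x ∉ s) : insert x s = {x} ∆ s := by
  rw [Finset.insert_eq, (Finset.disjoint_singleton_left.2 hx).symmDiff_eq_sup,
    Finset.sup_eq_union]

theorem pmap_insert {x : List ℕ} {s : Finset (List ℕ)} (hx : x ∉ s) :
    pmap (insert x s) = {x.dropLast} ∆ pmap s :=
  Finset.fold_insert hx

theorem pmap_singleton_symmDiff (x : List ℕ) (s : Finset (List ℕ)) :
    pmap ({x} ∆ s) = {x.dropLast} ∆ pmap s := by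
  by_cases hx : x ∈ s
  · obtain ⟨t, hxt, rfl⟩ : ∃ t, x ∉ t ∧ s = insert x t :=
      ⟨s.erase x, Finset.notMem_erase x s, (Finset.insert_erase hx).symm⟩
    rw [pmap_insert hxt, Finset.insert_eq_singleton_symmDiff hxt,
      symmDiff_symmDiff_cancel_left, symmDiff_symmDiff_cancel_left]
  · rw [← Finset.insert_eq_singleton_symmDiff hx, pmap_insert hx]

theorem pmap_symmDiff (u v : Finset (List ℕ)) : pmap (u ∆ v) = pmap u ∆ pmap v := by
  induction u using Finset.induction_on with
  | empty =>
    change pmap (⊥ ∆ v) = ⊥ ∆ pmap v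
    rw [bot_symmDiff, bot_symmDiff]
  | insert x s hx ih =>
    rw [Finset.insert_eq_singleton_symmDiff hx, symmDiff_assoc, pmap_singleton_symmDiff, ih,
      pmap_singleton_symmDiff, symmDiff_assoc]

theorem pmap_iterate_symmDiff (j : ℕ) (u v : Finset (List ℕ)) :
    pmap^[j] (u ∆ v) = pmap^[j] u ∆ pmap^[j] v := by
  induction j generalizing u v with
  | zero => rfl
  | succ j ih => simp only [Function.iterate_succ_apply, pmap_symmDiff, ih]

theorem exists_dropLast_eq_of_mem_pmap {u : Finset (List ℕ)} {y : List ℕ} (hy : y ∈ pmap u) :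
    ∃ x ∈ u, x.dropLast = y := by
  induction u using Finset.induction_on with
  | empty => simp [pmap] at hy
  | insert x s hx ih =>
    rw [pmap_insert hx, Finset.mem_symmDiff, Finset.mem_singleton] at hy
    rcases hy with ⟨rfl, -⟩ | ⟨hy, -⟩
    · exact ⟨x, Finset.mem_insert_self x s, rfl⟩
    · obtain ⟨z, hz, rfl⟩ := ih hy
      exact ⟨z, Finset.mem_insert_of_mem hz, rfl⟩

end Pmap

/-- `p^{x.1 - m}(x) ∈ G_m`; for `m > x.1` the subtraction truncates and this is `x.2`. -/
def lowerTo (m : ℕ) (x : GP) : Finset (List ℕ) := pmap^[x.1 - m] x.2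

section LowerTo

@[simp]
theorem lowerTo_self (x : GP) : lowerTo x.1 x = x.2 := by
  simp [lowerTo]

theorem lowerTo_symmDiff (m n : ℕ) (u v : Finset (List ℕ)) :
    lowerTo m (n, u ∆ v) = lowerTo m (n, u) ∆ lowerTo m (n, v) :=
  pmap_iterate_symmDiff _ u v

theorem lowerTo_lowerTo {m m' : ℕ} {x : GP} (hm : m ≤ m') (hm' : m' ≤ x.1) :
    lowerTo m (m', lowerTo m' x) = lowerTo m x := by
  simp only [lowerTo, ← Function.iterate_add_apply]
  congr 1
  omega

theorem fA_eq_lowerTo (x y : GP) :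
    fA x y = (min x.1 y.1, lowerTo (min x.1 y.1) x ∆ lowerTo (min x.1 y.1) y) := rfl

theorem fA_eq_of_le {p x : GP} (h : p.1 ≤ x.1) : fA p x = (p.1, p.2 ∆ lowerTo p.1 x) := by
  simp [fA, lowerTo, h]

end LowerTo

section Gset

variable {T : Set (List ℕ)}

theorem empty_mem_Gset (T : Set (List ℕ)) (m : ℕ) : ((m, ∅) : GP) ∈ Gset T := by
  simp [Gset]

theorem symmDiff_mem_Gset {m : ℕ} {u v : Finset (List ℕ)}
    (hu : ((m, u) : GP) ∈ Gset T) (hv : ((m, v) : GP) ∈ Gset T) :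
    ((m, u ∆ v) : GP) ∈ Gset T := by
  intro t ht
  rcases Finset.mem_symmDiff.1 ht with ⟨h, -⟩ | ⟨h, -⟩
  exacts [hu t h, hv t h]

theorem pmap_mem_Gset (hT : IsTree T) {m : ℕ} {u : Finset (List ℕ)}
    (hu : ((m + 1, u) : GP) ∈ Gset T) : ((m, pmap u) : GP) ∈ Gset T := by
  intro t ht
  obtain ⟨x, hx, rfl⟩ := exists_dropLast_eq_of_mem_pmap ht
  obtain ⟨hxT, hxl⟩ := hu x hx
  exact ⟨hT _ _ (List.dropLast_prefix x) hxT, by simp [hxl]⟩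

theorem pmap_iterate_mem_Gset (hT : IsTree T) {m j : ℕ} {u : Finset (List ℕ)}
    (hu : ((m + j, u) : GP) ∈ Gset T) : ((m, pmap^[j] u) : GP) ∈ Gset T := by
  induction j generalizing m with
  | zero => exact hu
  | succ j ih =>
    rw [Function.iterate_succ_apply']
    exact pmap_mem_Gset hT (ih (by rwa [Nat.add_right_comm]))

theorem lowerTo_mem_Gset (hT : IsTree T) {m : ℕ} {x : GP} (hx : x ∈ Gset T) (hm : m ≤ x.1) :
    ((m, lowerTo m x) : GP) ∈ Gset T := by
  obtain ⟨n, s⟩ := x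
  obtain ⟨j, rfl⟩ := Nat.exists_eq_add_of_le hm
  simpa [lowerTo] using pmap_iterate_mem_Gset hT hx

end Gset

section RankGE

variable {α : Type*} {S : α → α → Prop}

theorem RankGE.mono {o o' : Ordinal} {x : α} (h : RankGE S o x) (ho : o' ≤ o) :
    RankGE S o' x := by
  rw [RankGE] at h ⊢
  exact fun β hβ => h β (hβ.trans_le ho)

theorem rankGE_add_one_iff {o : Ordinal} {x : α} :
    RankGE S (o + 1) x ↔ ∃ y, S x y ∧ RankGE S o y := by
  rw [RankGE]
  refine ⟨fun h => h o (Order.lt_add_one_iff.2 le_rfl), ?_⟩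
  rintro ⟨y, hxy, hy⟩ β hβ
  exact ⟨y, hxy, hy.mono (Order.lt_add_one_iff.1 hβ)⟩

theorem omega0_mul_add_natCast_lt {γ β : Ordinal} (h : γ < β) (j : ℕ) :
    ω * γ + j < ω * β :=
  Ordinal.lt_mul_iff.2 ⟨γ, h, j, Ordinal.natCast_lt_omega0 j, rfl⟩

theorem rankGE_omega0_mul_iff {β : Ordinal} {x : α} :
    RankGE S (ω * β) x ↔ ∀ γ < β, ∀ j : ℕ, RankGE S (ω * γ + j) x := by
  refine ⟨fun h γ hγ j => h.mono (omega0_mul_add_natCast_lt hγ j).le, fun h => ?_⟩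
  rw [RankGE, Ordinal.forall_lt_mul]
  intro γ hγ r hr
  obtain ⟨j, rfl⟩ := Ordinal.lt_omega0.1 hr
  have h' := h γ hγ (j + 1)
  rwa [Nat.cast_succ, ← add_assoc, rankGE_add_one_iff] at h'

end RankGE

section RankGsucc

variable {T : Set (List ℕ)}

theorem rankGE_empty (T : Set (List ℕ)) (o : Ordinal) (m : ℕ) :
    RankGE (Gsucc T) o ((m, ∅) : GP) := by
  induction o using WellFoundedLT.induction generalizing m with
  | _ o ih =>
    rw [RankGE]
    exact fun β hβ =>
      ⟨(m + 1, ∅), ⟨empty_mem_Gset T (m + 1), rfl, rfl⟩, ih β hβ (m + 1)⟩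

theorem rankGE_add_nat_iff (hT : IsTree T) {x : GP} (hx : x ∈ Gset T) (o : Ordinal) (j : ℕ) :
    RankGE (Gsucc T) (o + j) x ↔
      ∃ y ∈ Gset T, y.1 = x.1 + j ∧ lowerTo x.1 y = x.2 ∧ RankGE (Gsucc T) o y := by
  induction j generalizing x with
  | zero =>
    refine ⟨fun h => ⟨x, hx, rfl, lowerTo_self x, by simpa using h⟩, ?_⟩
    rintro ⟨y, -, hy1, hyx, hy⟩
    have hxy : x = y := Prod.ext hy1.symm (by rw [← hyx]; simp [lowerTo, hy1])
    simpa [hxy] using hy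
  | succ j ih =>
    rw [Nat.cast_succ, ← add_assoc, rankGE_add_one_iff]
    constructor
    · rintro ⟨z, ⟨hz, hz1, hzx⟩, hzr⟩
      obtain ⟨y, hy, hy1, hyz, hyr⟩ := (ih hz).1 hzr
      refine ⟨y, hy, by omega, ?_, hyr⟩
      rw [← lowerTo_lowerTo (m' := z.1) (by omega) (by omega), hyz, ← hzx, hz1]
      simp [lowerTo]
    · rintro ⟨y, hy, hy1, hyx, hyr⟩
      have hz : ((x.1 + 1, lowerTo (x.1 + 1) y) : GP) ∈ Gset T :=
        lowerTo_mem_Gset hT hy (by omega)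
      refine ⟨_, ⟨hz, rfl, ?_⟩, (ih hz).2 ⟨y, hy, by simp [hy1]; omega, rfl, hyr⟩⟩
      simp [← hyx, lowerTo, hy1, Nat.add_sub_add_left, Function.iterate_succ_apply']

end RankGsucc

def diffAt {k : ℕ} (a b : Fin k → GP) (i : Fin k) : GP := ((a i).1, (a i).2 ∆ (b i).2)

structure CoherentDiff {k : ℕ} (a b : Fin k → GP) : Prop where
  level_eq : ∀ i, (b i).1 = (a i).1
  lowerTo_diffAt_eq : ∀ i j m, m ≤ (a i).1 → m ≤ (a j).1 →
    lowerTo m (diffAt a b i) = lowerTo m (diffAt a b j)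

section Terms

variable {T : Set (List ℕ)} {k : ℕ} {a b : Fin k → GP}

theorem lowerTo_diffAt {i : Fin k} (hi : (b i).1 = (a i).1) (m : ℕ) :
    lowerTo m (diffAt a b i) = lowerTo m (a i) ∆ lowerTo m (b i) := by
  simp [diffAt, lowerTo, hi, pmap_iterate_symmDiff]

theorem env_apply (a : Fin k → GP) (i : Fin k) : env a i = a i := by
  simp [env]

theorem ATerm.ok.succ {t : ATerm} (ht : t.ok T k) : t.ok T (k + 1) := by
  induction t with
  | var i => exact Nat.lt_succ_of_lt ht
  | app u t ih => exact ⟨ht.1, ih ht.2⟩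

theorem eval_env_snoc (a : Fin k → GP) (c : GP) {t : ATerm} (ht : t.ok T k) :
    t.eval (env (Fin.snoc a c)) = t.eval (env a) := by
  induction t with
  | var i =>
    have hi : i < k := ht
    simp only [ATerm.eval, env, hi, Nat.lt_succ_of_lt hi, dite_true]
    exact Fin.snoc_castSucc (α := fun _ => GP) (i := ⟨i, hi⟩) ..
  | app u t ih => simp only [ATerm.eval, ih ht.2]

theorem eqQF.of_snoc {c d : GP} (h : eqQF T (k + 1) (Fin.snoc a c) (Fin.snoc b d)) :
    eqQF T k a b := by
  intro t₁ t₂ h₁ h₂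
  simpa only [eval_env_snoc _ _ h₁, eval_env_snoc _ _ h₂] using h t₁ t₂ h₁.succ h₂.succ

theorem eqQF.symm (h : eqQF T k a b) : eqQF T k b a :=
  fun t₁ t₂ h₁ h₂ => (h t₁ t₂ h₁ h₂).symm

theorem eval_app_var {c : Fin k → GP} {i : Fin k} {m : ℕ} (s : Finset (List ℕ))
    (hm : m ≤ (c i).1) :
    (ATerm.app (m, s) (.var i)).eval (env c) = (m, s ∆ lowerTo m (c i)) := by
  simp [ATerm.eval, env_apply, fA_eq_of_le (p := (m, s)) hm]

theorem eqQF.level_le (h : eqQF T k a b) (i : Fin k) : (b i).1 ≤ (a i).1 := by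
  have hid : (ATerm.app ((a i).1, ∅) (.var i)).eval (env a) = (ATerm.var i).eval (env a) := by
    rw [eval_app_var _ le_rfl, lowerTo_self, ← Finset.bot_eq_empty, bot_symmDiff]
    simp [ATerm.eval, env_apply]
  have hb := congrArg Prod.fst
    ((h (.app ((a i).1, ∅) (.var i)) (.var i) ⟨empty_mem_Gset T _, i.isLt⟩ i.isLt).1 hid)
  simp only [ATerm.eval, env_apply, fA] at hb
  omega

/-- The terms `f_{(aᵢ)↓m}(xᵢ)` evaluate to `id_m` at `ā` and to `(aᵢ ∆ bᵢ)↓m` at `b̄`. -/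
theorem eqQF.coherentDiff (hT : IsTree T) (ha : ∀ i, a i ∈ Gset T) (h : eqQF T k a b) :
    CoherentDiff a b := by
  have hlev i : (b i).1 = (a i).1 := le_antisymm (h.level_le i) (h.symm.level_le i)
  refine ⟨hlev, fun i j m hi hj => ?_⟩
  have hterm (l : Fin k) (hl : m ≤ (a l).1) :
      (ATerm.app (m, lowerTo m (a l)) (.var l)).ok T k :=
    ⟨lowerTo_mem_Gset hT (ha l) hl, l.isLt⟩
  have hid : (ATerm.app (m, lowerTo m (a i)) (.var i)).eval (env a) =
      (ATerm.app (m, lowerTo m (a j)) (.var j)).eval (env a) := by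
    rw [eval_app_var _ hi, eval_app_var _ hj, symmDiff_self, symmDiff_self]
  have hb := (h _ _ (hterm i hi) (hterm j hj)).1 hid
  rw [eval_app_var _ (by rwa [hlev]), eval_app_var _ (by rwa [hlev])] at hb
  rw [lowerTo_diffAt (hlev i), lowerTo_diffAt (hlev j)]
  exact congrArg Prod.snd hb

theorem eval_env_eq_of_level_eq (hlev : ∀ i, (b i).1 = (a i).1) {t : ATerm} (ht : t.ok T k) :
    ∃ i, (t.eval (env a)).1 ≤ (a i).1 ∧ t.eval (env b) =
      ((t.eval (env a)).1, (t.eval (env a)).2 ∆ lowerTo (t.eval (env a)).1 (diffAt a b i)) := by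
  induction t with
  | var i₀ =>
    have hi : i₀ < k := ht
    refine ⟨⟨i₀, hi⟩, ?_⟩
    simp only [ATerm.eval, env, hi, dite_true, le_rfl, true_and]
    exact Prod.ext (hlev _) (by simp [diffAt, lowerTo])
  | app u t ih =>
    obtain ⟨i, hle, hb⟩ := ih ht.2
    have hm : min u.1 (t.eval (env a)).1 ≤ (t.eval (env a)).1 := min_le_right _ _
    refine ⟨i, hm.trans hle, ?_⟩
    simp only [ATerm.eval, hb, fA_eq_lowerTo]
    rw [lowerTo_symmDiff, Prod.mk.eta, lowerTo_lowerTo (x := diffAt a b i) hm hle, symmDiff_assoc]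

theorem CoherentDiff.eqQF (h : CoherentDiff a b) : eqQF T k a b := by
  intro t₁ t₂ h₁ h₂
  obtain ⟨i₁, hle₁, hb₁⟩ := eval_env_eq_of_level_eq h.level_eq h₁
  obtain ⟨i₂, hle₂, hb₂⟩ := eval_env_eq_of_level_eq h.level_eq h₂
  rw [hb₁, hb₂]
  by_cases hlev : (t₁.eval (env a)).1 = (t₂.eval (env a)).1
  · rw [h.lowerTo_diffAt_eq i₁ i₂ _ hle₁ (hlev ▸ hle₂), hlev]
    simp [Prod.ext_iff, hlev]
  · simp [Prod.ext_iff, hlev]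

theorem eqQF_iff_coherentDiff (hT : IsTree T) (ha : ∀ i, a i ∈ Gset T) :
    eqQF T k a b ↔ CoherentDiff a b :=
  ⟨eqQF.coherentDiff hT ha, CoherentDiff.eqQF⟩

end Terms

structure BFInvariant (T : Set (List ℕ)) (β : Ordinal) {k : ℕ} (a b : Fin k → GP) : Prop
    extends CoherentDiff a b where
  rankGE_diffAt : ∀ i, RankGE (Gsucc T) (ω * β) (diffAt a b i)

section BackAndForth

variable {T : Set (List ℕ)} {k : ℕ} {a b : Fin k → GP}

theorem BF_zero_iff : BF T 0 k a b ↔ eqQF T k a b := by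
  rw [BF]; simp

theorem BF_iff_of_ne_zero {β : Ordinal} (hβ : β ≠ 0) :
    BF T β k a b ↔ ∀ γ < β,
      (∀ c ∈ Gset T, ∃ d ∈ Gset T, BF T γ (k + 1) (Fin.snoc a c) (Fin.snoc b d)) ∧
      (∀ d ∈ Gset T, ∃ c ∈ Gset T, BF T γ (k + 1) (Fin.snoc a c) (Fin.snoc b d)) := by
  rw [BF]; simp [hβ]

theorem BF.eqQF {β : Ordinal} (h : BF T β k a b) : eqQF T k a b := by
  rcases eq_or_ne β 0 with rfl | hβ
  · exact BF_zero_iff.1 h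
  · obtain ⟨d, -, hd⟩ := ((BF_iff_of_ne_zero hβ).1 h 0 hβ.bot_lt).1 _ (empty_mem_Gset T 0)
    exact (BF_zero_iff.1 hd).of_snoc

theorem snoc_mem_Gset {c : GP} (ha : ∀ i, a i ∈ Gset T) (hc : c ∈ Gset T) (i : Fin (k + 1)) :
    (Fin.snoc a c : Fin (k + 1) → GP) i ∈ Gset T := by
  induction i using Fin.lastCases with
  | last => simpa using hc
  | cast i => simpa using ha i

theorem diffAt_mem_Gset {i : Fin k} (ha : a i ∈ Gset T) (hb : b i ∈ Gset T)
    (hi : (b i).1 = (a i).1) : diffAt a b i ∈ Gset T :=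
  symmDiff_mem_Gset ha (by rwa [← hi])

@[simp]
theorem diffAt_snoc_castSucc (c d : GP) (i : Fin k) :
    diffAt (Fin.snoc a c) (Fin.snoc b d) i.castSucc = diffAt a b i := by
  simp [diffAt]

@[simp]
theorem diffAt_snoc_last (c d : GP) :
    diffAt (Fin.snoc a c) (Fin.snoc b d) (Fin.last k) = (c.1, c.2 ∆ d.2) := by
  simp [diffAt]

theorem diffAt_comm {i : Fin k} (hi : (b i).1 = (a i).1) : diffAt b a i = diffAt a b i :=
  Prod.ext hi (symmDiff_comm _ _)

theorem CoherentDiff.symm (h : CoherentDiff a b) : CoherentDiff b a := by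
  refine ⟨fun i => (h.level_eq i).symm, fun i j m hi hj => ?_⟩
  rw [diffAt_comm (h.level_eq i), diffAt_comm (h.level_eq j)]
  exact h.lowerTo_diffAt_eq i j m (h.level_eq i ▸ hi) (h.level_eq j ▸ hj)

theorem BFInvariant.symm {β : Ordinal} (h : BFInvariant T β a b) : BFInvariant T β b a := by
  refine ⟨h.toCoherentDiff.symm, fun i => ?_⟩
  rw [diffAt_comm (h.level_eq i)]
  exact h.rankGE_diffAt i

/-- `ε` is lifted from the old difference of highest level below `c`, whose rank
`≥ ω·β > ω·γ + j` leaves room for any number `j` of lifting steps. -/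
theorem BFInvariant.exists_diff_extension (hT : IsTree T) {β γ : Ordinal} (hγβ : γ < β)
    (ha : ∀ i, a i ∈ Gset T) (hb : ∀ i, b i ∈ Gset T) (h : BFInvariant T β a b) (c : GP) :
    ∃ ε ∈ Gset T, ε.1 = c.1 ∧ RankGE (Gsucc T) (ω * γ) ε ∧
      ∀ i m, m ≤ (a i).1 → m ≤ c.1 → lowerTo m ε = lowerTo m (diffAt a b i) := by
  rcases isEmpty_or_nonempty (Fin k) with hk | hk
  · exact ⟨(c.1, ∅), empty_mem_Gset T _, rfl, rankGE_empty T _ _, fun i => isEmptyElim i⟩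
  obtain ⟨i₀, hi₀⟩ := Finite.exists_max fun i => min (a i).1 c.1
  set m₀ := min (a i₀).1 c.1
  have hδ₀ := diffAt_mem_Gset (ha i₀) (hb i₀) (h.level_eq i₀)
  have hx₀ : ((m₀, lowerTo m₀ (diffAt a b i₀)) : GP) ∈ Gset T :=
    lowerTo_mem_Gset hT hδ₀ (min_le_left _ _)
  have hrank :
      RankGE (Gsucc T) (ω * γ + (c.1 - m₀ : ℕ)) (m₀, lowerTo m₀ (diffAt a b i₀)) := by
    refine RankGE.mono ((rankGE_add_nat_iff hT hx₀ _ ((a i₀).1 - m₀)).2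
      ⟨_, hδ₀, ?_, rfl, h.rankGE_diffAt i₀⟩) ?_
    · simp only [diffAt]; omega
    · exact (omega0_mul_add_natCast_lt hγβ _).le.trans le_self_add
  obtain ⟨ε, hε, hε₁, hεδ, hεr⟩ := (rankGE_add_nat_iff hT hx₀ _ _).1 hrank
  dsimp only at hε₁ hεδ
  refine ⟨ε, hε, by omega, hεr, fun i m hmi hmc => ?_⟩
  have hm : m ≤ m₀ := (le_min hmi hmc).trans (hi₀ i)
  rw [← lowerTo_lowerTo (x := ε) hm (by omega), hεδ,
    lowerTo_lowerTo (x := diffAt a b i₀) hm (min_le_left _ _)]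
  exact h.lowerTo_diffAt_eq i₀ i m (hm.trans (min_le_left _ _)) hmi

theorem BFInvariant.exists_snoc (hT : IsTree T) {β γ : Ordinal} (hγβ : γ < β)
    (ha : ∀ i, a i ∈ Gset T) (hb : ∀ i, b i ∈ Gset T) (h : BFInvariant T β a b)
    {c : GP} (hc : c ∈ Gset T) :
    ∃ d ∈ Gset T, BFInvariant T γ (Fin.snoc a c) (Fin.snoc b d) := by
  obtain ⟨ε, hε, hε₁, hεr, hεδ⟩ := h.exists_diff_extension hT hγβ ha hb c
  have hlast : diffAt (Fin.snoc a c) (Fin.snoc b (c.1, c.2 ∆ ε.2)) (Fin.last k) = ε := by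
    rw [diffAt_snoc_last, symmDiff_symmDiff_cancel_left]
    exact Prod.ext hε₁.symm rfl
  refine ⟨(c.1, c.2 ∆ ε.2), symmDiff_mem_Gset hc (by rwa [← hε₁]),
    ⟨⟨fun i => ?_, ?_⟩, ?_⟩⟩
  · induction i using Fin.lastCases with
    | last => simp
    | cast i => simpa using h.level_eq i
  · intro i j m
    induction i using Fin.lastCases with
    | last =>
      induction j using Fin.lastCases with
      | last => simp
      | cast j =>
        simp only [Fin.snoc_last, Fin.snoc_castSucc, diffAt_snoc_castSucc, hlast]
        exact fun hmc hmj => hεδ j m hmj hmc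
    | cast i =>
      induction j using Fin.lastCases with
      | last =>
        simp only [Fin.snoc_last, Fin.snoc_castSucc, diffAt_snoc_castSucc, hlast]
        exact fun hmi hmc => (hεδ i m hmi hmc).symm
      | cast j =>
        simpa using h.lowerTo_diffAt_eq i j m
  · intro i
    induction i using Fin.lastCases with
    | last => rw [hlast]; exact hεr
    | cast i =>
      rw [diffAt_snoc_castSucc]
      exact (h.rankGE_diffAt i).mono (mul_le_mul_right hγβ.le _)

theorem BF.bfInvariant (hT : IsTree T) {β : Ordinal} (ha : ∀ i, a i ∈ Gset T)
    (hb : ∀ i, b i ∈ Gset T) (h : BF T β k a b) : BFInvariant T β a b := by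
  induction β using WellFoundedLT.induction generalizing k with
  | _ β ih =>
    have hcoh := (eqQF_iff_coherentDiff hT ha).1 h.eqQF
    refine ⟨hcoh, fun i => ?_⟩
    refine rankGE_omega0_mul_iff.2 fun γ hγ j => ?_
    -- Extend `ā` by `id_{|aᵢ|+j}`; the partner `d` then has a `j`-th predecessor `aᵢ ∆ bᵢ`.
    obtain ⟨d, hd, hBF⟩ := ((BF_iff_of_ne_zero hγ.ne_bot).1 h γ hγ).1
      (((a i).1 + j, ∅) : GP) (empty_mem_Gset T _)
    have hinv := ih γ hγ (snoc_mem_Gset ha (empty_mem_Gset T _)) (snoc_mem_Gset hb hd) hBF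
    have hδ := diffAt_mem_Gset (ha i) (hb i) (hcoh.level_eq i)
    refine (rankGE_add_nat_iff hT hδ _ j).2
      ⟨_, ?_, by simp [diffAt], ?_, hinv.rankGE_diffAt (Fin.last k)⟩
    · exact diffAt_mem_Gset (snoc_mem_Gset ha (empty_mem_Gset T _) _) (snoc_mem_Gset hb hd _)
        (hinv.level_eq _)
    · have := hinv.lowerTo_diffAt_eq (Fin.last k) i.castSucc (a i).1 (by simp) (by simp)
      rw [show (diffAt a b i).1 = (a i).1 from rfl, this, diffAt_snoc_castSucc]
      exact lowerTo_self _

theorem BFInvariant.bf (hT : IsTree T) {β : Ordinal} (ha : ∀ i, a i ∈ Gset T)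
    (hb : ∀ i, b i ∈ Gset T) (h : BFInvariant T β a b) : BF T β k a b := by
  induction β using WellFoundedLT.induction generalizing k with
  | _ β ih =>
    rcases eq_or_ne β 0 with rfl | hβ
    · exact BF_zero_iff.2 h.toCoherentDiff.eqQF
    refine (BF_iff_of_ne_zero hβ).2 fun γ hγ => ⟨fun c hc => ?_, fun d hd => ?_⟩
    · obtain ⟨d, hd, hinv⟩ := h.exists_snoc hT hγ ha hb hc
      exact ⟨d, hd, ih γ hγ (snoc_mem_Gset ha hc) (snoc_mem_Gset hb hd) hinv⟩
    · obtain ⟨c, hc, hinv⟩ := h.symm.exists_snoc hT hγ hb ha hd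
      exact ⟨c, hc, ih γ hγ (snoc_mem_Gset ha hc) (snoc_mem_Gset hb hd) hinv.symm⟩

theorem BF_iff_bfInvariant (hT : IsTree T) {β : Ordinal} (ha : ∀ i, a i ∈ Gset T)
    (hb : ∀ i, b i ∈ Gset T) : BF T β k a b ↔ BFInvariant T β a b :=
  ⟨BF.bfInvariant hT ha hb, BFInvariant.bf hT ha hb⟩

end BackAndForth

theorem stmt_15 (T : Set (List ℕ)) (hT : IsTree T) (n : ℕ) (a : Finset (List ℕ))
    (ha : ((n, a) : GP) ∈ Gset T) (β : Ordinal) :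
    BF T β 1 ![((n, a) : GP)] ![((n, ∅) : GP)] ↔
      RankGE (Gsucc T) (Ordinal.omega0 * β) (n, a) := by
  have hdiff : diffAt ![((n, a) : GP)] ![((n, ∅) : GP)] 0 = (n, a) := by simp [diffAt]
  rw [BF_iff_bfInvariant hT (by simpa using ha) (by simpa using empty_mem_Gset T n)]
  refine ⟨fun h => hdiff ▸ h.rankGE_diffAt 0,
    fun h => ⟨⟨fun i => ?_, fun i j m _ _ => ?_⟩, ?_⟩⟩
  · rw [Subsingleton.elim i 0]; rfl
  · rw [Subsingleton.elim i j]
  · simpa [Fin.forall_fin_one, hdiff] using h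
end

section
/- Suppose the order type of the set of ordinal ranks occurring at level m of a tree T is at most ω·m, and at level m+1 at most one node of level m has more than one successor, all successors of that node have ranks forming (up to finite perturbation) an increasing ω-sequence below a limit ordinal, and every other level-m node has at most one successor whose rank is one less. Then the order type of the set of ordinal ranks at level m+1 is at most ω·(m+1). -/
open scoped symmDiff

/-- The order type of a set of ordinals. -/
noncomputable def otype (S : Set Ordinal) : Ordinal :=
  Ordinal.type (Subrel ((· < ·) : Ordinal → Ordinal → Prop) (· ∈ S))

/-- `σ` has tree rank exactly `o`. -/
def HasRank (T : Set (List ℕ)) (σ : List ℕ) (o : Ordinal) : Prop :=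
  RankGE (TSucc T) o σ ∧ ¬ RankGE (TSucc T) (o + 1) σ

/-- The set of ordinal ranks occurring at level `k` of `T`. -/
def ranksAt (T : Set (List ℕ)) (k : ℕ) : Set Ordinal :=
  {o | ∃ σ, σ ∈ T ∧ σ.length = k ∧ HasRank T σ o}

/-- `σ` has more than one successor in `T`. -/
def Branches (T : Set (List ℕ)) (σ : List ℕ) : Prop :=
  ∃ k l : ℕ, k ≠ l ∧ σ ++ [k] ∈ T ∧ σ ++ [l] ∈ T

universe u v
open Ordinal Set

/-- Natural (Hessenberg) sum of ordinals. -/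
noncomputable def nadd : Ordinal.{u} → Ordinal.{u} → Ordinal.{u}
  | a, b => max (⨆ x : Iio a, Order.succ (nadd x.1 b)) (⨆ x : Iio b, Order.succ (nadd a x.1))
termination_by a b => (a, b)
decreasing_by
  · exact Prod.Lex.left _ _ x.2
  · exact Prod.Lex.right _ x.2

infix:65 " ♯ " => nadd

lemma nadd_def (a b : Ordinal.{u}) :
    nadd a b = max (⨆ x : Iio a, Order.succ (nadd x.1 b)) (⨆ x : Iio b, Order.succ (nadd a x.1)) := by
  rw [nadd]

lemma nadd_lt_nadd_left' {a a' : Ordinal.{u}} (b : Ordinal.{u}) (h : a' < a) :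
    nadd a' b < nadd a b := by
  rw [nadd_def a b]
  exact lt_of_lt_of_le (Order.lt_succ _) ((Ordinal.le_iSup
    (fun x : Iio a => Order.succ (nadd x.1 b)) ⟨a', h⟩).trans (le_max_left _ _))

lemma nadd_lt_nadd_right' (a : Ordinal.{u}) {b b' : Ordinal.{u}} (h : b' < b) :
    nadd a b' < nadd a b := by
  rw [nadd_def a b]
  exact lt_of_lt_of_le (Order.lt_succ _) ((Ordinal.le_iSup
    (fun x : Iio b => Order.succ (nadd a x.1)) ⟨b', h⟩).trans (le_max_right _ _))

lemma nadd_le_iff {a b c : Ordinal.{u}} :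
    nadd a b ≤ c ↔ (∀ a' < a, nadd a' b < c) ∧ (∀ b' < b, nadd a b' < c) := by
  rw [nadd_def, max_le_iff, Ordinal.iSup_le_iff, Ordinal.iSup_le_iff]
  constructor
  · rintro ⟨h1, h2⟩
    exact ⟨fun a' ha => Order.succ_le_iff.mp (h1 ⟨a', ha⟩),
      fun b' hb => Order.succ_le_iff.mp (h2 ⟨b', hb⟩)⟩
  · rintro ⟨h1, h2⟩
    exact ⟨fun x => Order.succ_le_iff.mpr (h1 x.1 x.2), fun x => Order.succ_le_iff.mpr (h2 x.1 x.2)⟩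

lemma nadd_le_nadd {a a' b b' : Ordinal.{u}} (ha : a' ≤ a) (hb : b' ≤ b) :
    nadd a' b' ≤ nadd a b := by
  have h1 : nadd a' b' ≤ nadd a b' := by
    rcases ha.eq_or_lt with h | h
    · rw [h]
    · exact (nadd_lt_nadd_left' b' h).le
  have h2 : nadd a b' ≤ nadd a b := by
    rcases hb.eq_or_lt with h | h
    · rw [h]
    · exact (nadd_lt_nadd_right' a h).le
  exact h1.trans h2

lemma nadd_lt_nadd_of_lt_of_le {a a' b b' : Ordinal.{u}} (ha : a' < a) (hb : b' ≤ b) :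
    nadd a' b' < nadd a b :=
  (nadd_lt_nadd_left' b' ha).trans_le (nadd_le_nadd le_rfl hb)

lemma nadd_lt_nadd_of_le_of_lt {a a' b b' : Ordinal.{u}} (ha : a' ≤ a) (hb : b' < b) :
    nadd a' b' < nadd a b :=
  (nadd_le_nadd ha le_rfl).trans_lt (nadd_lt_nadd_right' a hb)

lemma nadd_nat_le : ∀ (a : Ordinal.{u}) (n : ℕ), nadd a n ≤ a + n := by
  intro a
  induction a using Ordinal.induction with
  | h a IH =>
    intro n
    induction n using Nat.strong_induction_on with
    | _ n IHn =>
      rw [nadd_le_iff]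
      refine ⟨fun a' ha' => (IH a' ha' n).trans_lt ?_, fun b' hb' => ?_⟩
      · have h1 : a' + 1 ≤ a := Order.add_one_le_of_lt ha'
        calc a' + n < a' + n + 1 := lt_add_one _
          _ = a' + 1 + n := by
              rw [add_assoc, add_assoc]
              congr 1
              exact_mod_cast Nat.add_comm n 1
          _ ≤ a + n := add_le_add_left h1 _
      obtain ⟨j, rfl⟩ := Ordinal.lt_omega0.mp (hb'.trans (nat_lt_omega0 n))
      have hj : j < n := by exact_mod_cast hb'
      exact (IHn j hj).trans_lt ((add_lt_add_iff_left a).mpr hb')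

/-- Cross-universe equality of ordinals. -/
def OrdEq (a : Ordinal.{u}) (b : Ordinal.{v}) : Prop :=
  Ordinal.lift.{v} a = Ordinal.lift.{u} b

lemma OrdEq.lt_iff {a a' : Ordinal.{u}} {b b' : Ordinal.{v}} (h : OrdEq a b)
    (h' : OrdEq a' b') : a < a' ↔ b < b' := by
  rw [← Ordinal.lift_lt.{v}, h, h', Ordinal.lift_lt]

lemma OrdEq.inj {a a' : Ordinal.{u}} {b : Ordinal.{v}} (h : OrdEq a b)
    (h' : OrdEq a' b) : a = a' :=
  Ordinal.lift_inj.mp (h.trans h'.symm)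

lemma strictMono_add_nat {β : ℕ → Ordinal.{u}} (hβ : StrictMono β) (i n : ℕ) :
    β i + n ≤ β (i + n) := by
  induction n with
  | zero => simp
  | succ n ih =>
    have h1 : β (i + n) < β (i + n + 1) := hβ (Nat.lt_succ_self _)
    calc β i + (n + 1 : ℕ) = (β i + n) + 1 := by rw [Nat.cast_succ, add_assoc]
      _ ≤ β (i + n) + 1 := add_le_add_left ih 1
      _ ≤ β (i + n + 1) := by
          rw [Ordinal.add_one_eq_succ]; exact Order.succ_le_of_lt h1

lemma otype_le_of_map {A B : Set Ordinal.{u}} (f : Ordinal.{u} → Ordinal.{u})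
    (hmap : ∀ a ∈ A, f a ∈ B) (hmono : ∀ a ∈ A, ∀ b ∈ A, a < b → f a < f b) :
    otype A ≤ otype B := by
  have e : Subrel ((· < ·) : Ordinal.{u} → Ordinal.{u} → Prop) (· ∈ A) ↪r
      Subrel ((· < ·) : Ordinal.{u} → Ordinal.{u} → Prop) (· ∈ B) :=
    RelEmbedding.ofMonotone (fun x => ⟨f x, hmap x x.2⟩)
      (fun a b h => hmono a a.2 b b.2 h)
  exact e.ordinal_type_le

lemma otype_mono {A B : Set Ordinal.{u}} (h : A ⊆ B) : otype A ≤ otype B :=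
  otype_le_of_map id (fun a ha => h ha) (fun _ _ _ _ h => h)

lemma otype_le_of_forall_lt {S : Set Ordinal.{u}} {c : Ordinal.{u+1}}
    (f : Ordinal.{u} → Ordinal.{u+1})
    (hmono : ∀ a ∈ S, ∀ b ∈ S, a < b → f a < f b) (hlt : ∀ a ∈ S, f a < c) :
    otype S ≤ c := by
  haveI : IsWellOrder c.ToType (· < ·) := isWellOrder_lt
  have e : Subrel ((· < ·) : Ordinal.{u} → Ordinal.{u} → Prop) (· ∈ S) ↪r
      ((· < ·) : c.ToType → c.ToType → Prop) :=
    RelEmbedding.ofMonotone (fun x => ToType.mk ⟨f x, hlt x x.2⟩)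
      (fun a b h => by
        rw [OrderIso.lt_iff_lt]
        exact hmono a a.2 b b.2 h)
  have := e.ordinal_type_le
  rwa [type_toType c] at this

lemma otype_inter_Iio_lt {S : Set Ordinal.{u}} {x : Ordinal.{u}} (hx : x ∈ S) :
    otype (S ∩ Iio x) < otype S := by
  have : otype (S ∩ Iio x) =
      typein (Subrel ((· < ·) : Ordinal.{u} → Ordinal.{u} → Prop) (· ∈ S)) ⟨x, hx⟩ := by
    rw [← type_subrel]
    exact Quotient.sound ⟨⟨Equiv.ofBijective
      (fun y => ⟨⟨y.1, y.2.1⟩, y.2.2⟩)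
      ⟨fun a b h => by
        simp only [Subtype.mk.injEq] at h
        exact Subtype.ext (congrArg (fun z => z.1.1) h), fun z => ⟨⟨z.1.1, z.1.2, z.2⟩, rfl⟩⟩, by
        rintro ⟨a, ha⟩ ⟨b, hb⟩; rfl⟩⟩
  rw [this]
  exact typein_lt_type _ _

lemma otype_finite {S : Set Ordinal.{u}} (h : S.Finite) : otype S < omega0 := by
  have := h.fintype
  rw [otype, type_fintype]
  exact nat_lt_omega0 _

lemma otype_le_omega0 {S : Set Ordinal.{u}}
    (h : ∀ x ∈ S, (S ∩ Iio x).Finite) : otype S ≤ omega0 := by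
  by_contra hc
  push_neg at hc
  obtain ⟨⟨x, hx⟩, hx'⟩ := typein_surj
    (Subrel ((· < ·) : Ordinal.{u} → Ordinal.{u} → Prop) (· ∈ S)) hc
  have h1 : otype (S ∩ Iio x) = omega0.{u+1} := by
    rw [← hx', ← type_subrel]
    exact Quotient.sound ⟨⟨Equiv.ofBijective
      (fun y => ⟨⟨y.1, y.2.1⟩, y.2.2⟩)
      ⟨fun a b hh => by
        simp only [Subtype.mk.injEq] at hh
        exact Subtype.ext (congrArg (fun z => z.1.1) hh), fun z => ⟨⟨z.1.1, z.1.2, z.2⟩, rfl⟩⟩, by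
        rintro ⟨a, ha⟩ ⟨b, hb⟩; rfl⟩⟩
  exact absurd (h1 ▸ otype_finite (h x hx)) (lt_irrefl _)

lemma omega0_le_sub_aux : ∀ (k : ℕ) (a : Ordinal.{u}), a < omega0 * k →
    ∃ (k' n' : ℕ), k' + 1 ≤ k ∧ a ≤ omega0 * k' + n' := by
  intro k
  induction k with
  | zero => intro a ha; simp at ha
  | succ k ih =>
    intro a ha
    rcases lt_or_ge a (omega0 * k) with h | h
    · obtain ⟨k', n', hk', hle⟩ := ih a h
      exact ⟨k', n', hk'.trans (Nat.le_succ k), hle⟩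
    · have hsub : omega0 * k + (a - omega0 * k) = a := Ordinal.add_sub_cancel_of_le h
      have hlt : a - omega0 * k < omega0 := by
        have : omega0 * k + (a - omega0 * k) < omega0 * k + omega0 := by
          rw [hsub]
          rwa [Nat.cast_succ, mul_add, mul_one] at ha
        exact (add_lt_add_iff_left _).mp this
      obtain ⟨n, hn⟩ := Ordinal.lt_omega0.mp hlt
      exact ⟨k, n, le_refl _, by rw [← hsub, hn]⟩

lemma nadd_omega0_le : ∀ (a : Ordinal.{u}), ∀ (k n : ℕ), a ≤ omega0 * k + n →
    a ♯ omega0 ≤ omega0 * (k + 1) + n := by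
  intro a
  induction a using Ordinal.induction with
  | h a IH =>
    intro k n h
    rw [nadd_le_iff]
    constructor
    · intro a' ha'
      cases n with
      | zero =>
        simp only [Nat.cast_zero, add_zero] at h ⊢
        have ha'' : a' < omega0 * k := lt_of_lt_of_le ha' h
        obtain ⟨k', n', hk', hle⟩ := omega0_le_sub_aux k a' ha''
        have := IH a' ha' k' n' hle
        calc a' ♯ omega0 ≤ omega0 * (k' + 1) + n' := this
          _ < omega0 * (k' + 1) + omega0 := by
              exact add_lt_add_right (nat_lt_omega0 n') _
          _ = omega0 * (k' + 1 + 1) := by rw [mul_add_one ω (_ + 1), mul_add_one]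
          _ ≤ omega0 * (k + 1) := by
              apply mul_le_mul_right
              exact_mod_cast Nat.succ_le_succ hk'
      | succ n' =>
        have hle : a' ≤ omega0 * k + n' := by
          have : a' < omega0 * k + (n' + 1 : ℕ) := lt_of_lt_of_le ha' h
          rw [Nat.cast_succ, ← add_assoc, Ordinal.add_one_eq_succ] at this
          exact Order.lt_succ_iff.mp this
        calc a' ♯ omega0 ≤ omega0 * (k + 1) + n' := IH a' ha' k n' hle
          _ < omega0 * (k + 1) + (n' + 1 : ℕ) := by
              apply add_lt_add_right
              exact_mod_cast Nat.lt_succ_self n'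
    · intro c' hc'
      obtain ⟨j, hj⟩ := Ordinal.lt_omega0.mp hc'
      subst hj
      refine lt_of_le_of_lt (nadd_nat_le a j) ?_
      calc a + j ≤ omega0 * k + n + j := add_le_add_left h _
        _ = omega0 * k + (n + j : ℕ) := by rw [add_assoc, Nat.cast_add]
        _ < omega0 * k + (omega0 + n) := by
            apply add_lt_add_right
            exact lt_of_lt_of_le (nat_lt_omega0 _) le_self_add
        _ = omega0 * (k + 1) + n := by rw [mul_add_one, add_assoc]

lemma otype_union_le {A B : Set Ordinal.{u}} {a b : Ordinal.{u+1}}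
    (hA : otype A ≤ a) (hB : otype B ≤ b) : otype (A ∪ B) ≤ a ♯ b := by
  have key : ∀ x y : Ordinal.{u}, x < y →
      ∀ S : Set Ordinal.{u}, S ∩ Iio x = (S ∩ Iio y) ∩ Iio x := by
    intro x y hxy S
    ext z
    simp only [mem_inter_iff, mem_Iio]
    exact ⟨fun ⟨h1, h2⟩ => ⟨⟨h1, h2.trans hxy⟩, h2⟩, fun ⟨⟨h1, _⟩, h2⟩ => ⟨h1, h2⟩⟩
  apply otype_le_of_forall_lt (fun x => otype (A ∩ Iio x) ♯ otype (B ∩ Iio x))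
  · intro x hx y hy hxy
    have hAm : otype (A ∩ Iio x) ≤ otype (A ∩ Iio y) := by
      rw [key x y hxy A]; exact otype_mono inter_subset_left
    have hBm : otype (B ∩ Iio x) ≤ otype (B ∩ Iio y) := by
      rw [key x y hxy B]; exact otype_mono inter_subset_left
    rcases hx with hx | hx
    · have : otype (A ∩ Iio x) < otype (A ∩ Iio y) := by
        rw [key x y hxy A]
        exact otype_inter_Iio_lt ⟨hx, hxy⟩
      exact nadd_lt_nadd_of_lt_of_le this hBm
    · have : otype (B ∩ Iio x) < otype (B ∩ Iio y) := by
        rw [key x y hxy B]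
        exact otype_inter_Iio_lt ⟨hx, hxy⟩
      exact nadd_lt_nadd_of_le_of_lt hAm this
  · intro x hx
    rcases hx with hx | hx
    · exact nadd_lt_nadd_of_lt_of_le ((otype_inter_Iio_lt hx).trans_le hA)
        ((otype_mono inter_subset_left).trans hB)
    · exact nadd_lt_nadd_of_le_of_lt ((otype_mono inter_subset_left).trans hA)
        ((otype_inter_Iio_lt hx).trans_le hB)

lemma otype_union_le' {A B : Set Ordinal.{u}} {m : ℕ}
    (hA : otype A ≤ omega0 * m) (hB : otype B ≤ omega0) :
    otype (A ∪ B) ≤ omega0 * (m + 1) := by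
  have h1 := otype_union_le hA hB
  have h2 := nadd_omega0_le (omega0 * m) m 0 (by simp)
  simpa using h1.trans h2

lemma rankGE_iff {α : Type*} {succ : α → α → Prop} {o : Ordinal.{u}} {x : α} :
    RankGE succ o x ↔ ∀ β < o, ∃ y, succ x y ∧ RankGE succ β y := by
  rw [RankGE]

lemma rankGE_mono {α : Type*} {succ : α → α → Prop} {o o' : Ordinal.{u}} {x : α}
    (h : o' ≤ o) (hR : RankGE succ o x) : RankGE succ o' x := by
  rw [rankGE_iff] at hR ⊢
  exact fun β hβ => hR β (hβ.trans_le h)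

lemma rankGE_lift {α : Type*} {succ : α → α → Prop} :
    ∀ (o : Ordinal.{u}) (x : α), RankGE succ (Ordinal.lift.{v} o) x ↔ RankGE succ o x := by
  intro o
  induction o using Ordinal.induction with
  | h o IH =>
    intro x
    rw [rankGE_iff, rankGE_iff (o := o)]
    constructor
    · intro h β hβ
      obtain ⟨y, hy, hR⟩ := h (Ordinal.lift.{v} β) (Ordinal.lift_lt.mpr hβ)
      exact ⟨y, hy, (IH β hβ y).mp hR⟩
    · intro h β' hβ'
      obtain ⟨β, hβ, rfl⟩ := Ordinal.lt_lift_iff.mp hβ'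
      obtain ⟨y, hy, hR⟩ := h β hβ
      exact ⟨y, hy, (IH β hβ y).mpr hR⟩

lemma hasRank_lift {T : Set (List ℕ)} {σ : List ℕ} {o : Ordinal.{u}} :
    HasRank T σ (Ordinal.lift.{v} o) ↔ HasRank T σ o := by
  unfold HasRank
  rw [rankGE_lift, show Ordinal.lift.{v} o + 1 = Ordinal.lift.{v} (o + 1) by
    rw [Ordinal.lift_add, Ordinal.lift_one], rankGE_lift]

lemma hasRank_unique {T : Set (List ℕ)} {σ : List ℕ} {a b : Ordinal.{u}}
    (ha : HasRank T σ a) (hb : HasRank T σ b) : a = b := by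
  rcases lt_trichotomy a b with h | h | h
  · exact absurd (rankGE_mono ((by rwa [Ordinal.add_one_eq_succ, Order.succ_le_iff])) hb.1) ha.2
  · exact h
  · exact absurd (rankGE_mono ((by rwa [Ordinal.add_one_eq_succ, Order.succ_le_iff])) ha.1) hb.2

lemma hasRank_lift_eq {T : Set (List ℕ)} {σ : List ℕ} {a : Ordinal.{u}} {b : Ordinal.{v}}
    (ha : HasRank T σ a) (hb : HasRank T σ b) :
    Ordinal.lift.{v} a = Ordinal.lift.{u} b :=
  hasRank_unique (hasRank_lift.mpr ha) (hasRank_lift.mpr hb)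

lemma rankGE_of_not_acc {α : Type*} {succ : α → α → Prop} :
    ∀ (o : Ordinal.{u}) (x : α), ¬ Acc (fun a b => succ b a) x → RankGE succ o x := by
  intro o
  induction o using Ordinal.induction with
  | h o IH =>
    intro x hx
    rw [rankGE_iff]
    intro β hβ
    have : ¬ ∀ y, succ x y → Acc (fun a b => succ b a) y := by
      intro h
      exact hx (Acc.intro x fun y hy => h y hy)
    push_neg at this
    obtain ⟨y, hy, hyacc⟩ := this
    exact ⟨y, hy, IH β hβ y hyacc⟩

lemma acc_of_hasRank {T : Set (List ℕ)} {σ : List ℕ} {o : Ordinal.{u}}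
    (h : HasRank T σ o) : Acc (fun a b => TSucc T b a) σ := by
  by_contra hacc
  exact h.2 (rankGE_of_not_acc _ _ hacc)

lemma exists_hasRank_of_acc {T : Set (List ℕ)} {x : List ℕ}
    (h : Acc (fun a b => TSucc T b a) x) : ∃ o : Ordinal.{v}, HasRank T x o := by
  induction h with
  | intro x hx IH =>
    choose f hf using IH
    set o : Ordinal.{v} := ⨆ p : {y // TSucc T x y}, (f p.1 p.2 + 1) with ho
    refine ⟨o, ?_, ?_⟩
    · rw [rankGE_iff]
      intro β hβ
      rw [ho, Ordinal.lt_iSup_iff] at hβ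
      obtain ⟨⟨y, hy⟩, hβy⟩ := hβ
      have : β ≤ f y hy := by
        rwa [Ordinal.add_one_eq_succ, Order.lt_succ_iff] at hβy
      exact ⟨y, hy, rankGE_mono this (hf y hy).1⟩
    · intro hR
      rw [rankGE_iff] at hR
      obtain ⟨y, hy, hRy⟩ := hR o (by rw [Ordinal.add_one_eq_succ]; exact Order.lt_succ o)
      have h1 : f y hy + 1 ≤ o := Ordinal.le_iSup (fun p : {y // TSucc T x y} => f p.1 p.2 + 1) ⟨y, hy⟩
      exact (hf y hy).2 (rankGE_mono h1 hRy)

lemma exists_hasRank_of_hasRank {T : Set (List ℕ)} {σ : List ℕ} {o : Ordinal.{u}}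
    (h : HasRank T σ o) : ∃ o' : Ordinal.{v}, HasRank T σ o' :=
  exists_hasRank_of_acc (acc_of_hasRank h)

lemma hasRank_parent {T : Set (List ℕ)} {σ : List ℕ} {c : ℕ} {o : Ordinal.{u}}
    (hσc : σ ++ [c] ∈ T) (hnb : ¬ Branches T σ) (h : HasRank T (σ ++ [c]) o) :
    HasRank T σ (o + 1) := by
  constructor
  · rw [rankGE_iff]
    intro β hβ
    have hβ' : β ≤ o := by rwa [Ordinal.add_one_eq_succ, Order.lt_succ_iff] at hβ
    exact ⟨σ ++ [c], ⟨hσc, c, rfl⟩, rankGE_mono hβ' h.1⟩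
  · intro hR
    rw [rankGE_iff] at hR
    obtain ⟨y, ⟨hyT, k, rfl⟩, hRy⟩ := hR (o + 1)
      (by rw [Ordinal.add_one_eq_succ (o := o + 1)]; exact Order.lt_succ _)
    have hkc : k = c := by
      by_contra hkc
      exact hnb ⟨k, c, hkc, hyT, hσc⟩
    subst hkc
    exact h.2 hRy


lemma hasRank_ordEq {T : Set (List ℕ)} {σ : List ℕ} {a : Ordinal.{u}} {b : Ordinal.{v}}
    (ha : HasRank T σ a) (hb : HasRank T σ b) : OrdEq a b :=
  hasRank_lift_eq ha hb

lemma otype_le_of_ordEq {A : Set Ordinal.{u}} {B : Set Ordinal.{v}}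
    (h : ∀ a ∈ A, ∃ b ∈ B, OrdEq a b) {c : Ordinal.{u+1}} {c' : Ordinal.{v+1}}
    (hc : OrdEq c c') (hB : otype B ≤ c') : otype A ≤ c := by
  classical
  choose f hfB hfE using h
  have e : Subrel ((· < ·) : Ordinal.{u} → Ordinal.{u} → Prop) (· ∈ A) ↪r
      Subrel ((· < ·) : Ordinal.{v} → Ordinal.{v} → Prop) (· ∈ B) :=
    RelEmbedding.ofMonotone (fun x => ⟨f x x.2, hfB x x.2⟩)
      (fun a b hab => (OrdEq.lt_iff (hfE a a.2) (hfE b b.2)).mp hab)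
  have h1 : Ordinal.lift.{max (u+1) (v+1)} (otype A) ≤
      Ordinal.lift.{max (u+1) (v+1)} (otype B) :=
    Ordinal.lift_type_le.{u+1, v+1, max (u+1) (v+1)}.mpr ⟨e.collapse⟩
  have hcc : Ordinal.lift.{max (u+1) (v+1)} c = Ordinal.lift.{max (u+1) (v+1)} c' := by
    have h' := congrArg (Ordinal.lift.{max (u+1) (v+1)}) hc
    rwa [Ordinal.lift_lift, Ordinal.lift_lift] at h'
  have h2 : Ordinal.lift.{max (u+1) (v+1)} (otype B) ≤
      Ordinal.lift.{max (u+1) (v+1)} c' := Ordinal.lift_le.mpr hB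
  rw [← hcc] at h2
  exact Ordinal.lift_le.mp (h1.trans h2)


lemma hdrop_aux {T : Set (List ℕ)} (hT : IsTree T) {m : ℕ} :
    ∀ o ∈ ranksAt T (m + 1), ∃ σ c, σ ∈ T ∧ σ.length = m ∧
      σ ++ [c] ∈ T ∧ HasRank T (σ ++ [c]) (o : Ordinal.{u}) := by
  rintro o ⟨τ, hτT, hτlen, hτrank⟩
  have hne : τ ≠ [] := by
    intro h; rw [h] at hτlen; simp at hτlen
  refine ⟨τ.dropLast, τ.getLast hne, hT _ τ (List.dropLast_prefix τ) hτT, ?_, ?_, ?_⟩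
  · simp [List.length_dropLast, hτlen]
  · rwa [List.dropLast_append_getLast hne]
  · rwa [List.dropLast_append_getLast hne]

lemma ranksAt_transfer {T : Set (List ℕ)} {k : ℕ} :
    ∀ a ∈ (ranksAt T k : Set Ordinal.{u}), ∃ b ∈ (ranksAt T k : Set Ordinal.{v}), OrdEq a b := by
  rintro a ⟨σ, hσT, hσlen, hσR⟩
  obtain ⟨b, hb⟩ := exists_hasRank_of_hasRank hσR
  exact ⟨b, ⟨σ, hσT, hσlen, hb⟩, hasRank_ordEq hσR hb⟩

lemma main_aux {T : Set (List ℕ)} (hT : IsTree T) {m : ℕ}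
    (h1 : otype (ranksAt T m : Set Ordinal.{u}) ≤ Ordinal.omega0 * m) :
    otype ({o : Ordinal.{u} | o + 1 ∈ ranksAt T m}) ≤ Ordinal.omega0 * m := by
  refine le_trans (otype_le_of_map (fun o => o + 1) ?_ ?_) h1
  · intro a ha; exact ha
  · intro a _ b _ hab
    show a + 1 < b + 1
    rw [Ordinal.add_one_eq_succ, Ordinal.add_one_eq_succ]
    exact Order.succ_lt_succ hab

theorem stmt_17 (T : Set (List ℕ)) (hT : IsTree T) (m : ℕ)
    (h1 : otype (ranksAt T m) ≤ Ordinal.omega0 * m)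
    (h2 : ∀ σ τ : List ℕ, σ ∈ T → σ.length = m → τ ∈ T → τ.length = m →
      Branches T σ → Branches T τ → σ = τ)
    (h3 : ∀ σ : List ℕ, σ ∈ T → σ.length = m → Branches T σ →
      ∃ (β : ℕ → Ordinal) (kk : ℕ → ℕ) (lim₀ : Ordinal), StrictMono β ∧ Order.IsSuccLimit lim₀ ∧
        (∀ j : ℕ, β j + kk j < lim₀) ∧
        {o : Ordinal | ∃ c : ℕ, σ ++ [c] ∈ T ∧ HasRank T (σ ++ [c]) o} ⊆
          {o : Ordinal | ∃ j : ℕ, o = β j + kk j})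
    (h4 : ∀ σ : List ℕ, σ ∈ T → σ.length = m → ¬ Branches T σ →
      ∀ c : ℕ, σ ++ [c] ∈ T → ∀ o : Ordinal, HasRank T (σ ++ [c]) o → HasRank T σ (o + 1)) :
    otype (ranksAt T (m + 1)) ≤ Ordinal.omega0 * (m + 1) := by
  classical
  by_cases hbr : ∃ σ₀, σ₀ ∈ T ∧ σ₀.length = m ∧ Branches T σ₀
  · obtain ⟨σ₀, hσ₀T, hσ₀len, hσ₀br⟩ := hbr
    obtain ⟨β, kk, lim₀, hβ, hlim, hbd, hsub⟩ := h3 σ₀ hσ₀T hσ₀len hσ₀br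
    set A : Set Ordinal := {o | o + 1 ∈ ranksAt T m} with hAdef
    set B : Set Ordinal :=
      {o | ∃ c : ℕ, σ₀ ++ [c] ∈ T ∧ HasRank T (σ₀ ++ [c]) o} with hBdef
    have hA : otype A ≤ Ordinal.omega0 * m := by
      refine le_trans (main_aux hT ?_) (le_refl _)
      refine otype_le_of_ordEq (ranksAt_transfer) ?_ h1
      simp [OrdEq, Ordinal.lift_mul, Ordinal.lift_omega0, Ordinal.lift_natCast]
    have hvals : ∀ o ∈ B, ∃ j : ℕ, ∃ o₂, o₂ = β j + kk j ∧ OrdEq o o₂ := by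
      rintro o ⟨c, hcT, hcR⟩
      obtain ⟨o₂, ho₂⟩ := exists_hasRank_of_hasRank hcR
      obtain ⟨j, hj⟩ := hsub ⟨c, hcT, ho₂⟩
      exact ⟨j, o₂, hj, hasRank_ordEq hcR ho₂⟩
    have hBω : otype B ≤ Ordinal.omega0 := by
      apply otype_le_omega0
      intro x hx
      obtain ⟨i, x₂, hx₂val, hx₂⟩ := hvals x hx
      have hfin : (⋃ j ∈ Set.Iio (i + kk i + 1),
          {a : Ordinal | OrdEq a (β j + (kk j : Ordinal))}).Finite :=
        Set.Finite.biUnion (Set.finite_Iio _)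
          (fun j _ => Set.Subsingleton.finite (fun a ha b hb => OrdEq.inj ha hb))
      apply Set.Finite.subset hfin
      rintro y ⟨hyB, hylt⟩
      obtain ⟨j, y₂, hy₂val, hy₂⟩ := hvals y hyB
      have hlt2 : y₂ < x₂ := (OrdEq.lt_iff hy₂ hx₂).mp hylt
      rw [hy₂val, hx₂val] at hlt2
      have hj : j < i + kk i + 1 := by
        by_contra hj
        push_neg at hj
        have hb1 : β i + ((kk i : Ordinal) + 1) ≤ β (i + kk i + 1) := by
          have := strictMono_add_nat hβ i (kk i + 1)
          rwa [Nat.cast_succ, ← Nat.add_assoc] at this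
        have hb2 : β (i + kk i + 1) ≤ β j := hβ.monotone hj
        have hb3 : (β j : Ordinal) ≤ β j + kk j := le_self_add
        have hcon : β i + ((kk i : Ordinal) + 1) ≤ β i + kk i :=
          le_trans hb1 (le_trans hb2 (le_trans hb3 hlt2.le))
        rw [← add_assoc] at hcon
        exact absurd hcon (not_le.mpr (lt_add_one _))
      refine Set.mem_biUnion hj ?_
      show OrdEq y (β j + (kk j : Ordinal))
      rw [← hy₂val]; exact hy₂
    have hsubset : ranksAt T (m + 1) ⊆ A ∪ B := by
      intro o ho
      obtain ⟨σ, c, hσT, hσlen, hcT, hrank⟩ := hdrop_aux hT o ho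
      by_cases hbrσ : Branches T σ
      · have hσeq : σ = σ₀ := h2 σ σ₀ hσT hσlen hσ₀T hσ₀len hbrσ hσ₀br
        subst hσeq
        exact Or.inr ⟨c, hcT, hrank⟩
      · exact Or.inl ⟨σ, hσT, hσlen, hasRank_parent hcT hbrσ hrank⟩
    have key : otype (ranksAt T (m + 1) : Set Ordinal) ≤
        Ordinal.omega0 * ((m : Ordinal) + 1) :=
      calc otype (ranksAt T (m + 1) : Set Ordinal) ≤ otype (A ∪ B) := otype_mono hsubset
        _ ≤ Ordinal.omega0 * ((m : Ordinal) + 1) := otype_union_le' hA hBω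
    refine otype_le_of_ordEq (ranksAt_transfer) ?_ key
    simp [OrdEq, Ordinal.lift_mul, Ordinal.lift_add, Ordinal.lift_omega0,
      Ordinal.lift_natCast, Ordinal.lift_one]
  · set A : Set Ordinal := {o | o + 1 ∈ ranksAt T m} with hAdef
    have hA : otype A ≤ Ordinal.omega0 * m := by
      refine le_trans (main_aux hT ?_) (le_refl _)
      refine otype_le_of_ordEq (ranksAt_transfer) ?_ h1
      simp [OrdEq, Ordinal.lift_mul, Ordinal.lift_omega0, Ordinal.lift_natCast]
    have hsubset : ranksAt T (m + 1) ⊆ A := by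
      intro o ho
      obtain ⟨σ, c, hσT, hσlen, hcT, hrank⟩ := hdrop_aux hT o ho
      have hbrσ : ¬ Branches T σ := fun hb => hbr ⟨σ, hσT, hσlen, hb⟩
      exact ⟨σ, hσT, hσlen, hasRank_parent hcT hbrσ hrank⟩
    calc otype (ranksAt T (m + 1)) ≤ otype A := otype_mono hsubset
      _ ≤ Ordinal.omega0 * m := hA
      _ ≤ Ordinal.omega0 * ((m : Ordinal) + 1) := by
          apply mul_le_mul_right
          exact le_of_lt (lt_add_one _)
end
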